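/- Let A be a Γ-graded R-algebra, C ⊆ A_ε a commutative subalgebra such that I(C) forms a set of local units for A_ε, and suppose A = span(N_⋆(C)). Then I(C) forms a set of local units for all of A: for any finite {a_1, …, a_l} ⊆ A there exists e ∈ I(C) with e a_j = a_j = a_j e for all j. -/

import Mathlib

/-- A `Γ`-graded `R`-algebra structure on `A`. -/
structure IsAlgGrading {R : Type*} [CommRing R] {Γ : Type*} [Group Γ] [DecidableEq Γ]
    {A : Type*} [Ring A] [Algebra R A] (𝒜 : Γ → Submodule R A) : Prop where
  isInternal : DirectSum.IsInternal 𝒜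
  mul_mem : ∀ {γ δ : Γ} {x y : A}, x ∈ 𝒜 γ → y ∈ 𝒜 δ → x * y ∈ 𝒜 (γ * δ)

/-- `n` is a normaliser of the commutative subalgebra `C`. -/
def IsNormaliser {R : Type*} [CommRing R] {A : Type*} [Ring A] [Algebra R A]
    (C : NonUnitalSubalgebra R A) (n : A) : Prop :=
  ∃ m : A, m * n * m = m ∧ n * m * n = n ∧ (∀ c ∈ C, m * c * n ∈ C) ∧ (∀ c ∈ C, n * c * m ∈ C)

/-- `n` is a homogeneous normaliser of `C`: a normaliser lying in some `A_γ`. -/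
def IsHomNormaliser {R : Type*} [CommRing R] {Γ : Type*} [Group Γ] [DecidableEq Γ]
    {A : Type*} [Ring A] [Algebra R A] (𝒜 : Γ → Submodule R A)
    (C : NonUnitalSubalgebra R A) (n : A) : Prop :=
  IsNormaliser C n ∧ ∃ γ : Γ, n ∈ 𝒜 γ

/-- For a homogeneous normaliser `n` there are `u v ∈ 𝒜 ε` with `u * n = n = n * v`. -/
theorem hom_normaliser_units {R : Type*} [CommRing R] {Γ : Type*} [Group Γ] [DecidableEq Γ]
    {A : Type*} [Ring A] [Algebra R A] {𝒜 : Γ → Submodule R A} (h : IsAlgGrading 𝒜)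
    {C : NonUnitalSubalgebra R A} {n : A} (hn : IsHomNormaliser 𝒜 C n) :
    ∃ u v : A, u ∈ 𝒜 (1 : Γ) ∧ v ∈ 𝒜 (1 : Γ) ∧ u * n = n ∧ n * v = n := by
  classical
  obtain ⟨⟨m, _, hnmn, _, _⟩, γ, hγ⟩ := hn
  set dec : A ≃+ DirectSum Γ (fun δ => 𝒜 δ) :=
    (AddEquiv.ofBijective (DirectSum.coeAddMonoidHom 𝒜) h.isInternal).symm with hdec
  have hsymm : ∀ w, dec.symm w = DirectSum.coeAddMonoidHom 𝒜 w := fun w => rfl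
  have hdec_of : ∀ (δ : Γ) (x : A) (hx : x ∈ 𝒜 δ),
      dec x = DirectSum.of (fun δ => 𝒜 δ) δ ⟨x, hx⟩ := by
    intro δ x hx
    apply dec.symm.injective
    rw [dec.symm_apply_apply, hsymm, DirectSum.coeAddMonoidHom_of]
  set π : Γ → A → A := fun δ a => ((dec a) δ : A) with hπ
  have hπ_self : ∀ (δ : Γ) (x : A), x ∈ 𝒜 δ → π δ x = x := by
    intro δ x hx
    simp [hπ, hdec_of δ x hx, DirectSum.of_eq_same]
  have hπ_ne : ∀ (δ δ' : Γ) (x : A), x ∈ 𝒜 δ → δ ≠ δ' → π δ' x = 0 := by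
    intro δ δ' x hx hne
    simp [hπ, hdec_of δ x hx, DirectSum.of_eq_of_ne _ _ _ hne.symm]
  have hπ_add : ∀ (δ : Γ) (a b : A), π δ (a + b) = π δ a + π δ b := by
    intro δ a b
    simp [hπ, map_add, DirectSum.add_apply]
  have key : ∀ w : DirectSum Γ (fun δ => 𝒜 δ),
      π γ (n * (DirectSum.coeAddMonoidHom 𝒜 w) * n) = n * ((w γ⁻¹ : A)) * n := by
    intro w
    induction w using DirectSum.induction_on with
    | zero =>
        have : π γ (0 : A) = 0 := by simp [hπ, map_zero]
        simp [this]
    | of δ x =>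
        rw [DirectSum.coeAddMonoidHom_of]
        by_cases hδ : δ = γ⁻¹
        · subst hδ
          have hmem : n * (x : A) * n ∈ 𝒜 γ := by
            have := h.mul_mem (h.mul_mem hγ x.2) hγ
            simpa using this
          rw [hπ_self γ _ hmem, DirectSum.of_eq_same]
        · have hmem : n * (x : A) * n ∈ 𝒜 (γ * δ * γ) :=
            h.mul_mem (h.mul_mem hγ x.2) hγ
          have hne : γ * δ * γ ≠ γ := by
            intro hc
            apply hδ
            have : γ * δ = γ * γ⁻¹ := by
              apply mul_right_cancel (b := γ)
              simpa [mul_inv_cancel] using hc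
            exact mul_left_cancel this
          rw [hπ_ne _ _ _ hmem hne, DirectSum.of_eq_of_ne _ _ _ (Ne.symm hδ)]
          simp
    | add w₁ w₂ ih₁ ih₂ =>
        rw [map_add, mul_add, add_mul, hπ_add, ih₁, ih₂, DirectSum.add_apply]
        push_cast
        rw [mul_add, add_mul]
  have hm : DirectSum.coeAddMonoidHom 𝒜 (dec m) = m := by
    rw [← hsymm, dec.symm_apply_apply]
  have hkey := key (dec m)
  rw [hm, hnmn, hπ_self γ n hγ] at hkey
  set m' : A := ((dec m) γ⁻¹ : A) with hm'
  have hm'mem : m' ∈ 𝒜 γ⁻¹ := ((dec m) γ⁻¹).2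
  refine ⟨n * m', m' * n, ?_, ?_, ?_, ?_⟩
  · have := h.mul_mem hγ hm'mem
    simpa [mul_inv_cancel] using this
  · have := h.mul_mem hm'mem hγ
    simpa [inv_mul_cancel] using this
  · rw [mul_assoc] at hkey ⊢; exact hkey.symm
  · rw [← mul_assoc]; exact hkey.symm

/-- If the idempotents `I(C)` form a set of local units for `A_ε` and
`A = span N_⋆(C)`, then `I(C)` forms a set of local units for all of `A`. -/
theorem localUnits_for_all {R : Type*} [CommRing R] {Γ : Type*} [Group Γ]
    [DecidableEq Γ] {A : Type*} [Ring A] [Algebra R A]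
    (𝒜 : Γ → Submodule R A) (h : IsAlgGrading 𝒜)
    (C : NonUnitalSubalgebra R A) (hC : (C : Set A) ⊆ (𝒜 (1 : Γ) : Set A))
    (hcomm : ∀ a ∈ C, ∀ b ∈ C, a * b = b * a)
    (hlu : ∀ s : Finset A, (↑s : Set A) ⊆ (𝒜 (1 : Γ) : Set A) →
      ∃ e ∈ C, e * e = e ∧ ∀ a ∈ s, e * a = a ∧ a * e = a)
    (hspan : Submodule.span R {n : A | IsHomNormaliser 𝒜 C n} = ⊤) :
    ∀ s : Finset A, ∃ e ∈ C, e * e = e ∧ ∀ a ∈ s, e * a = a ∧ a * e = a := by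
  classical
  intro s
  have hsub : ∀ a : A, a ∈ Submodule.span R {n : A | IsHomNormaliser 𝒜 C n} := by
    rw [hspan]; exact fun a => trivial
  have hfin : ∀ a : A, ∃ T : Finset A, (↑T : Set A) ⊆ {n : A | IsHomNormaliser 𝒜 C n} ∧
      a ∈ Submodule.span R (↑T : Set A) :=
    fun a => Submodule.mem_span_finite_of_mem_span (hsub a)
  choose T hT1 hT2 using hfin
  set Tall : Finset A := s.biUnion T with hTall_def
  have hTall : ∀ n ∈ Tall, IsHomNormaliser 𝒜 C n := by
    intro n hn
    rw [hTall_def, Finset.mem_biUnion] at hn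
    obtain ⟨a, _, hn⟩ := hn
    exact hT1 a hn
  have huv : ∀ n ∈ Tall, ∃ u v : A, u ∈ 𝒜 (1 : Γ) ∧ v ∈ 𝒜 (1 : Γ) ∧ u * n = n ∧ n * v = n :=
    fun n hn => hom_normaliser_units h (hTall n hn)
  choose! u v hu hv huu hvv using huv
  set F : Finset A := Tall.image u ∪ Tall.image v with hF_def
  have hF : (↑F : Set A) ⊆ (𝒜 (1 : Γ) : Set A) := by
    intro x hx
    simp only [hF_def, Finset.coe_union, Set.mem_union, Finset.coe_image,
      Set.mem_image, Finset.mem_coe] at hx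
    rcases hx with ⟨n, hn, rfl⟩ | ⟨n, hn, rfl⟩
    · exact hu n hn
    · exact hv n hn
  obtain ⟨e, heC, hee, he⟩ := hlu F hF
  refine ⟨e, heC, hee, ?_⟩
  have hen : ∀ n ∈ Tall, e * n = n ∧ n * e = n := by
    intro n hn
    have hue : e * u n = u n :=
      (he (u n) (Finset.mem_union_left _ (Finset.mem_image_of_mem u hn))).1
    have hve : v n * e = v n :=
      (he (v n) (Finset.mem_union_right _ (Finset.mem_image_of_mem v hn))).2
    constructor
    · conv_lhs => rw [← huu n hn]
      rw [← mul_assoc, hue, huu n hn]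
    · conv_lhs => rw [← hvv n hn]
      rw [mul_assoc, hve, hvv n hn]
  intro a ha
  have haspan := hT2 a
  have hTsub : ∀ n ∈ T a, n ∈ Tall := by
    intro n hn
    rw [hTall_def, Finset.mem_biUnion]
    exact ⟨a, ha, hn⟩
  refine Submodule.span_induction (p := fun x _ => e * x = x ∧ x * e = x)
    (fun n hn => hen n (hTsub n hn)) (by simp) ?_ ?_ haspan
  · intro x y _ _ hx hy
    exact ⟨by rw [mul_add, hx.1, hy.1], by rw [add_mul, hx.2, hy.2]⟩
  · intro r x _ hx
    exact ⟨by rw [mul_smul_comm, hx.1], by rw [smul_mul_assoc, hx.2]⟩
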